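/- arXiv:2507.13216 — 4 statements merged into one kernel-verified Lean document; each statement's English description precedes it below -/
import Mathlib

section
/- Let ν ≥ 1. The map v ↦ C_v, where C_v φ = φ∘v is the substitution operator, induces a bijection between the set of tangent-to-identity formal diffeomorphisms in ν variables and the set of tangent-to-identity ℂ-algebra automorphisms of ℂ[[z₁,…,z_ν]]. -/
open MvPowerSeries Finsupp

noncomputable section

/-- Formal power series in ν variables over ℂ. -/
abbrev PS (ν : ℕ) := MvPowerSeries (Fin ν) ℂ

/-- Total degree of a multi-index. -/
def totalDeg {ν : ℕ} (n : Fin ν →₀ ℕ) : ℕ := ∑ i, n i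

/-- The finset of multi-indices of total degree at most `K`. -/
def degLE (ν K : ℕ) : Finset (Fin ν →₀ ℕ) :=
  (Finset.Iic (Finsupp.equivFunOnFinite.symm fun _ => K)).filter fun m => totalDeg m ≤ K

/-- The substitution (composition) operator `C_v : φ ↦ φ ∘ v`, for a ν-tuple `v` of formal
power series without constant term (each of total order ≥ 1): the coefficient of `φ ∘ v`
on a multi-index `n` is the corresponding coefficient of the finite sum
`∑_{|m| ≤ |n|} (coeff m φ) • v₁^{m₁} ⋯ v_ν^{m_ν}`. -/
def Csub {ν : ℕ} (v : Fin ν → PS ν) (φ : PS ν) : PS ν :=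
  fun n => MvPowerSeries.coeff n
    (∑ m ∈ degLE ν (totalDeg n), MvPowerSeries.coeff m φ • ∏ i, v i ^ m i)

/-- A ν-tuple of formal power series is a tangent-to-identity formal diffeomorphism if
`f i = z_i + a_i` with `ord a_i ≥ 2` for each `i`. -/
def TangentToId {ν : ℕ} (f : Fin ν → PS ν) : Prop :=
  ∀ i, 2 ≤ (f i - MvPowerSeries.X i).order

/-- An operator on formal power series is tangent to identity if it increases the total
order by at least one unit: `ord (Θ φ - φ) ≥ ord φ + 1` for all `φ`. -/
def TangentToIdOp {ν : ℕ} (Θ : PS ν → PS ν) : Prop :=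
  ∀ φ : PS ν, φ.order + 1 ≤ (Θ φ - φ).order

/-!
For `v` without constant term, `C_v` is the substitution `MvPowerSeries.subst v`, an algebra
endomorphism. When `v` is tangent to the identity, `v^m - z^m` has order `> |m|`, so `C_v - id`
raises the order. An additive operator `L` with `L - id` order-raising is injective, and
surjective: the Neumann series `∑ₖ (id - L)ᵏ ψ` converges coefficientwise to a preimage of
`ψ`. Conversely, a tangent-to-identity automorphism `Θ` does not lower the order and
agrees with `subst (Θ ∘ X)` on polynomials, hence everywhere; and `v` is recovered as
`C_v zᵢ = vᵢ`.
-/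

namespace MvPowerSeries

variable {σ R : Type*}

section Semiring

variable [Semiring R]

theorem one_le_order_X (s : σ) : 1 ≤ (X s : MvPowerSeries σ R).order :=
  one_le_order_iff_constCoeff_eq_zero.2 (constantCoeff_X s)

theorem order_X [Nontrivial R] (s : σ) : (X s : MvPowerSeries σ R).order = 1 := by
  rw [X_def, order_monomial_of_ne_zero one_ne_zero, degree_single, Nat.cast_one]

end Semiring

section Ring

variable [Ring R]

theorem one_le_order_of_two_le_order_sub_X {f : MvPowerSeries σ R} {i : σ}
    (h : 2 ≤ (f - X i).order) : 1 ≤ f.order :=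
  calc 1 ≤ min (f - X i).order (X i : MvPowerSeries σ R).order :=
        le_min (le_trans (by norm_num) h) (one_le_order_X i)
    _ ≤ (f - X i + X i).order := min_order_le_add
    _ = f.order := by rw [sub_add_cancel]

/-- `TangentToIdOp`, for power series in any set of variables over any ring. -/
def IsTangentToId (L : MvPowerSeries σ R → MvPowerSeries σ R) : Prop :=
  ∀ φ, φ.order + 1 ≤ (L φ - φ).order

theorem IsTangentToId.order_le {L : MvPowerSeries σ R → MvPowerSeries σ R}
    (hL : IsTangentToId L) (φ : MvPowerSeries σ R) : φ.order ≤ (L φ).order :=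
  calc φ.order ≤ min φ.order (L φ - φ).order := le_min le_rfl (le_self_add.trans (hL φ))
    _ ≤ (φ + (L φ - φ)).order := min_order_le_add
    _ = (L φ).order := by rw [add_sub_cancel]

theorem IsTangentToId.two_le_order_sub_X [Nontrivial R]
    {L : MvPowerSeries σ R → MvPowerSeries σ R} (hL : IsTangentToId L) (i : σ) :
    2 ≤ (L (X i) - X i).order := by
  simpa [order_X, one_add_one_eq_two] using hL (X i)

section Neumann

variable {F : Type*} [FunLike F (MvPowerSeries σ R) (MvPowerSeries σ R)] (L : F)
  (ψ : MvPowerSeries σ R)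

def neumannTerm (k : ℕ) : MvPowerSeries σ R := (fun φ => φ - L φ)^[k] ψ

def neumannSum (K : ℕ) : MvPowerSeries σ R := ∑ k ∈ Finset.range K, neumannTerm L ψ k

theorem neumannTerm_succ (k : ℕ) :
    neumannTerm L ψ (k + 1) = neumannTerm L ψ k - L (neumannTerm L ψ k) :=
  Function.iterate_succ_apply' _ _ _

variable {L}

theorem le_order_neumannTerm (hL : IsTangentToId L) (k : ℕ) :
    (k : ℕ∞) ≤ (neumannTerm L ψ k).order := by
  induction k with
  | zero => simp
  | succ k ih =>
    rw [neumannTerm_succ, ← neg_sub, order_neg]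
    push_cast
    exact (add_le_add ih le_rfl).trans (hL _)

theorem coeff_neumannSum_of_lt (hL : IsTangentToId L) {n : σ →₀ ℕ} {K : ℕ}
    (hK : degree n < K) :
    coeff n (neumannSum L ψ K) = coeff n (neumannSum L ψ (degree n + 1)) := by
  induction K, hK using Nat.le_induction with
  | base => rfl
  | succ K hK ih =>
    rw [neumannSum, Finset.sum_range_succ, map_add, ← neumannSum, ih,
      coeff_of_lt_order ((Nat.cast_lt.2 hK).trans_le (le_order_neumannTerm ψ hL K)), add_zero]

variable [AddMonoidHomClass F (MvPowerSeries σ R) (MvPowerSeries σ R)]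

theorem IsTangentToId.injective (hL : IsTangentToId L) : Function.Injective L := by
  refine (injective_iff_map_eq_zero L).2 fun φ hφ => order_eq_top_iff.1 ?_
  by_contra hfin
  have := hL φ
  rw [hφ, zero_sub, order_neg, ENat.add_one_le_iff hfin] at this
  exact this.false

theorem map_neumannSum (K : ℕ) : L (neumannSum L ψ K) = ψ - neumannTerm L ψ K := by
  induction K with
  | zero => simp [neumannSum, neumannTerm]
  | succ K ih =>
    rw [neumannSum, Finset.sum_range_succ, map_add, ← neumannSum, ih, neumannTerm_succ]
    abel

theorem IsTangentToId.surjective (hL : IsTangentToId L) : Function.Surjective L := by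
  intro ψ
  -- the coefficient of `n` in the partial sums is constant from `K = |n| + 1` on
  let φ : MvPowerSeries σ R := fun n => coeff n (neumannSum L ψ (degree n + 1))
  refine ⟨φ, ext fun n => ?_⟩
  have hφ : ((degree n + 1 : ℕ) : ℕ∞) ≤ (φ - neumannSum L ψ (degree n + 1)).order := by
    refine le_order fun m hm => ?_
    rw [map_sub, coeff_neumannSum_of_lt ψ hL (Nat.cast_lt.1 hm)]
    exact sub_self _
  have hlt : (n.degree : ℕ∞) < (n.degree + 1 : ℕ) := by exact_mod_cast Nat.lt_succ_self _
  rw [← sub_add_cancel φ (neumannSum L ψ (degree n + 1)), map_add, map_neumannSum, map_add,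
    coeff_of_lt_order (hlt.trans_le (hφ.trans (hL.order_le _))), map_sub,
    coeff_of_lt_order (hlt.trans_le (le_order_neumannTerm ψ hL _)), zero_add, sub_zero]

end Neumann

end Ring

section CommRing

variable [CommRing R]

theorem hasSubst_of_two_le_order_sub_X [Finite σ] {a : σ → MvPowerSeries σ R}
    (ha : ∀ i, 2 ≤ (a i - X i).order) : HasSubst a :=
  hasSubst_of_constantCoeff_zero fun i =>
    one_le_order_iff_constCoeff_eq_zero.1 (one_le_order_of_two_le_order_sub_X (ha i))

theorem le_order_prod_sub_prod {ι : Type*} (s : Finset ι) {f g : ι → MvPowerSeries σ R}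
    {d : ι → ℕ∞} (hg : ∀ i ∈ s, d i ≤ (g i).order)
    (hfg : ∀ i ∈ s, d i + 1 ≤ (f i - g i).order) :
    (∑ i ∈ s, d i) + 1 ≤ (∏ i ∈ s, f i - ∏ i ∈ s, g i).order := by
  induction s using Finset.cons_induction with
  | empty => simp
  | cons a s ha ih =>
    simp only [Finset.mem_cons, forall_eq_or_imp] at hg hfg
    have hfa : d a ≤ (f a).order :=
      calc d a ≤ min (g a).order (f a - g a).order := le_min hg.1 (le_self_add.trans hfg.1)
        _ ≤ (g a + (f a - g a)).order := min_order_le_add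
        _ = (f a).order := by rw [add_sub_cancel]
    have hgs : ∑ i ∈ s, d i ≤ (∏ i ∈ s, g i).order :=
      (Finset.sum_le_sum hg.2).trans (le_order_prod g s)
    rw [Finset.prod_cons, Finset.prod_cons, Finset.sum_cons,
      show f a * ∏ i ∈ s, f i - g a * ∏ i ∈ s, g i
        = f a * (∏ i ∈ s, f i - ∏ i ∈ s, g i) + (f a - g a) * ∏ i ∈ s, g i by ring]
    refine le_trans (le_min ?_ ?_) min_order_le_add
    · calc d a + ∑ i ∈ s, d i + 1 = d a + (∑ i ∈ s, d i + 1) := add_assoc _ _ _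
        _ ≤ _ := (add_le_add hfa (ih hg.2 hfg.2)).trans le_order_mul
    · calc d a + ∑ i ∈ s, d i + 1 = d a + 1 + ∑ i ∈ s, d i := add_right_comm _ _ _
        _ ≤ _ := (add_le_add hfg.1 hgs).trans le_order_mul

theorem le_order_pow_sub_pow {f g : MvPowerSeries σ R} {d : ℕ∞} (hg : d ≤ g.order)
    (hfg : d + 1 ≤ (f - g).order) (k : ℕ) : k * d + 1 ≤ (f ^ k - g ^ k).order := by
  simpa using le_order_prod_sub_prod (Finset.range k) (f := fun _ => f) (g := fun _ => g)
    (fun _ _ => hg) (fun _ _ => hfg)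

theorem degree_le_order_prod_pow {a : σ → MvPowerSeries σ R} (ha : ∀ i, 1 ≤ (a i).order)
    (d : σ →₀ ℕ) : (d.degree : ℕ∞) ≤ (d.prod fun s e => a s ^ e).order :=
  calc (d.degree : ℕ∞) = ∑ s ∈ d.support, d s • (1 : ℕ∞) := by simp [degree_apply]
    _ ≤ ∑ s ∈ d.support, (a s ^ d s).order :=
      Finset.sum_le_sum fun s _ => (nsmul_le_nsmul_right (ha s) _).trans (le_order_pow _)
    _ ≤ _ := le_order_prod _ _

theorem degree_add_one_le_order_prod_pow_sub {a : σ → MvPowerSeries σ R}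
    (ha : ∀ i, 2 ≤ (a i - X i).order) (d : σ →₀ ℕ) :
    (d.degree : ℕ∞) + 1 ≤
      (d.prod (fun s e => a s ^ e) - d.prod (fun s e => X s ^ e)).order := by
  have hX (s : σ) : (d s : ℕ∞) ≤ (X s ^ d s : MvPowerSeries σ R).order := by
    simpa using (nsmul_le_nsmul_right (one_le_order_X s) (d s)).trans (le_order_pow _)
  have hpow (s : σ) : (d s : ℕ∞) + 1 ≤ (a s ^ d s - X s ^ d s).order := by
    simpa using le_order_pow_sub_pow (one_le_order_X s)
      (by simpa [one_add_one_eq_two] using ha s) (d s)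
  simpa [degree_apply, Finsupp.prod] using
    le_order_prod_sub_prod d.support (fun s _ => hX s) fun s _ => hpow s

theorem isTangentToId_substAlgHom {a : σ → MvPowerSeries σ R} (has : HasSubst a)
    (ha : ∀ i, 2 ≤ (a i - X i).order) : IsTangentToId (substAlgHom (R := R) has) := by
  rw [coe_substAlgHom]
  -- compare `subst a f` with `subst X f = f` termwise: the `d`-th terms differ by
  -- `coeff d f • (a ^ d - X ^ d)`, of order `> |d| ≥ ord f`
  refine fun f => le_order fun e he => ?_
  have hf : subst X f = f := congrFun subst_self f
  nth_rewrite 2 [← hf]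
  rw [map_sub, coeff_subst has, coeff_subst HasSubst.X,
    ← finsum_sub_distrib (coeff_subst_finite has f e) (coeff_subst_finite HasSubst.X f e)]
  refine finsum_eq_zero_of_forall_eq_zero fun d => ?_
  by_cases hd : coeff d f = 0
  · simp [hd]
  have he' : (e.degree : ℕ∞) <
      (d.prod (fun s e => a s ^ e) - d.prod (fun s e => X s ^ e)).order :=
    calc (e.degree : ℕ∞) < f.order + 1 := he
      _ ≤ d.degree + 1 := add_le_add (order_le hd) le_rfl
      _ ≤ _ := degree_add_one_le_order_prod_pow_sub ha d
  rw [← smul_sub, ← map_sub, coeff_of_lt_order he', smul_zero]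

theorem algHom_ext_of_order_le [Finite σ]
    {Θ₁ Θ₂ : MvPowerSeries σ R →ₐ[R] MvPowerSeries σ R}
    (h₁ : ∀ f, f.order ≤ (Θ₁ f).order) (h₂ : ∀ f, f.order ≤ (Θ₂ f).order)
    (hX : ∀ i, Θ₁ (X i) = Θ₂ (X i)) : Θ₁ = Θ₂ := by
  have hpoly : Θ₁.comp (MvPolynomial.coeToMvPowerSeries.algHom R) =
      Θ₂.comp (MvPolynomial.coeToMvPowerSeries.algHom R) :=
    MvPolynomial.algHom_ext fun i => by simpa using hX i
  ext f n
  set p := truncTotal (n.degree + 1) f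
  have hr : ((n.degree + 1 : ℕ) : ℕ∞) ≤ (f - p).order := by
    refine le_order fun m hm => ?_
    rw [map_sub, MvPolynomial.coeff_coe, coeff_truncTotal _ (by exact_mod_cast hm), sub_self]
  have hlt : (n.degree : ℕ∞) < (n.degree + 1 : ℕ) := by exact_mod_cast Nat.lt_succ_self _
  rw [← add_sub_cancel (p : MvPowerSeries σ R) f, map_add, map_add, map_add, map_add,
    coeff_of_lt_order (hlt.trans_le (hr.trans (h₁ _))),
    coeff_of_lt_order (hlt.trans_le (hr.trans (h₂ _)))]
  simpa using congrArg (coeff n) (AlgHom.congr_fun hpoly p)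

theorem IsTangentToId.eq_subst [Finite σ] [Nontrivial R]
    {Θ : MvPowerSeries σ R →ₐ[R] MvPowerSeries σ R} (hΘ : IsTangentToId Θ)
    (f : MvPowerSeries σ R) : Θ f = subst (fun i => Θ (X i)) f := by
  have has := hasSubst_of_two_le_order_sub_X hΘ.two_le_order_sub_X
  rw [← substAlgHom_apply has]
  exact AlgHom.congr_fun (algHom_ext_of_order_le hΘ.order_le
    (isTangentToId_substAlgHom has hΘ.two_le_order_sub_X).order_le
    fun i => by rw [substAlgHom_X]) f

end CommRing

end MvPowerSeries

section Substitution

variable {ν : ℕ} {v : Fin ν → PS ν}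

theorem mem_degLE {K : ℕ} {m : Fin ν →₀ ℕ} : m ∈ degLE ν K ↔ m.degree ≤ K := by
  rw [degLE, Finset.mem_filter, totalDeg, ← degree_eq_sum, and_iff_right_iff_imp]
  exact fun h => Finset.mem_Iic.2 fun i => (le_degree i m).trans h

theorem Csub_eq_subst (hv : ∀ i, 1 ≤ (v i).order) (φ : PS ν) : Csub v φ = subst v φ := by
  ext n
  rw [coeff_subst (hasSubst_of_constantCoeff_zero fun i =>
      one_le_order_iff_constCoeff_eq_zero.1 (hv i)),
    finsum_eq_sum_of_support_subset _ (s := degLE ν (totalDeg n))]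
  · change coeff n (∑ m ∈ degLE ν (totalDeg n), coeff m φ • ∏ i, v i ^ m i) = _
    simp [map_sum, Finsupp.prod_fintype]
  · intro m hm
    rw [Finset.mem_coe, mem_degLE, totalDeg, ← degree_eq_sum]
    by_contra hmn
    refine hm ?_
    dsimp only
    rw [coeff_of_lt_order ((Nat.cast_lt.2 (not_le.1 hmn)).trans_le
      (degree_le_order_prod_pow hv m)), smul_zero]

theorem TangentToId.Csub_eq_subst (hv : TangentToId v) (φ : PS ν) : Csub v φ = subst v φ :=
  _root_.Csub_eq_subst (fun i => one_le_order_of_two_le_order_sub_X (hv i)) φ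

end Substitution

theorem substitution_bijection_diffeos_automorphisms_general (ν : ℕ) :
    (∀ v : Fin ν → PS ν, TangentToId v →
      ∃ Θ : PS ν ≃ₐ[ℂ] PS ν, (∀ φ : PS ν, Θ φ = Csub v φ) ∧
        TangentToIdOp (fun φ : PS ν => Θ φ)) ∧
    (∀ Θ : PS ν ≃ₐ[ℂ] PS ν, TangentToIdOp (fun φ : PS ν => Θ φ) →
      ∃! v : Fin ν → PS ν, TangentToId v ∧ ∀ φ : PS ν, Θ φ = Csub v φ) := by
  refine ⟨fun v hv => ?_, fun Θ hΘ => ?_⟩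
  · have has := hasSubst_of_two_le_order_sub_X hv
    have hL := isTangentToId_substAlgHom (R := ℂ) has hv
    refine ⟨AlgEquiv.ofBijective _ ⟨hL.injective, hL.surjective⟩, fun φ => ?_, hL⟩
    rw [hv.Csub_eq_subst, ← substAlgHom_apply has]
    rfl
  · have hΘ' : IsTangentToId (Θ : PS ν →ₐ[ℂ] PS ν) := hΘ
    have hv : TangentToId fun i => Θ (X i) := hΘ'.two_le_order_sub_X
    refine ⟨_, ⟨hv, fun φ => by rw [hv.Csub_eq_subst]; exact hΘ'.eq_subst φ⟩, ?_⟩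
    rintro w ⟨hw, hΘw⟩
    funext i
    rw [hΘw, hw.Csub_eq_subst, subst_X (hasSubst_of_two_le_order_sub_X hw)]

/-- The map `v ↦ C_v` induces a bijection between the set of tangent-to-identity formal
diffeomorphisms in ν variables and the set of tangent-to-identity ℂ-algebra automorphisms
of `ℂ[[z₁,…,z_ν]]`:  for every tangent-to-identity `v`, the operator `C_v` is a
tangent-to-identity algebra automorphism, and every tangent-to-identity algebra
automorphism is of the form `C_v` for a unique tangent-to-identity `v`. -/
theorem substitution_bijection_diffeos_automorphisms (ν : ℕ) (hν : 1 ≤ ν) :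
    (∀ v : Fin ν → PS ν, TangentToId v →
      ∃ Θ : PS ν ≃ₐ[ℂ] PS ν, (∀ φ : PS ν, Θ φ = Csub v φ) ∧
        TangentToIdOp (fun φ : PS ν => Θ φ)) ∧
    (∀ Θ : PS ν ≃ₐ[ℂ] PS ν, TangentToIdOp (fun φ : PS ν => Θ φ) →
      ∃! v : Fin ν → PS ν, TangentToId v ∧ ∀ φ : PS ν, Θ φ = Csub v φ) :=
  substitution_bijection_diffeos_automorphisms_general ν
end
end

section
/- Let α > 0 and define κ_α = 1 + 2α − 2√(α(1+α)) and φ_α(w) = w − α·w²/(1−w) for |w| < 1. Then the function Ψ_α(z) = (1 + z − (1 − 2(1+2α)z + z²)^{1/2})/(2(1+α)), where the principal branch of the square root is used, is holomorphic on the disc {z ∈ ℂ : |z| < κ_α}, satisfies Ψ_α(0) = 0 and Ψ_α'(0) = 1, and is a right composition inverse of φ_α: φ_α(Ψ_α(z)) = z for all |z| < κ_α. Moreover 1 − 2(1+2α)z + z² = (κ_α − z)(κ_α* − z) with κ_α* = 1/κ_α = 1 + 2α + 2√(α(1+α)). -/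
open Complex Metric

/-!
With `c = 1 + 2α`, the equation `φ_α(w) = z` clears denominators to the quadratic
`(1 + α) w² - (1 + z) w + z = 0`, whose discriminant is `1 - 2cz + z² = (κ - z)(κ* - z)`,
since `κ κ* = 1` and `κ + κ* = 2c`. For `|z| < κ ≤ κ*` both factors lie in the right
half-plane, so their product avoids the slit `(-∞, 0]`: the principal square root is
holomorphic there, `Ψ_α(z)` is a root of the quadratic, and that root is never `1` because
`α ≠ 0`.
-/

theorem mul_mem_slitPlane_of_re_pos {a b : ℂ} (ha : 0 < a.re) (hb : 0 < b.re) :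
    a * b ∈ slitPlane := by
  rw [mem_slitPlane_iff, mul_re, mul_im, or_iff_not_imp_right, not_not]
  intro him
  -- `b.re * (a * b).re = a.re * |b|²` once `(a * b).im = 0`
  have hre : (a.re * b.re - a.im * b.im) * b.re = a.re * (b.re * b.re + b.im * b.im) := by
    linear_combination (-b.im) * him
  nlinarith [mul_pos ha (add_pos_of_pos_of_nonneg (mul_pos hb hb) (mul_self_nonneg b.im))]

theorem sub_mul_sub_mem_slitPlane {κ κs : ℝ} {z : ℂ} (hz : ‖z‖ < κ) (hκ : κ ≤ κs) :
    ((κ : ℂ) - z) * ((κs : ℂ) - z) ∈ slitPlane := by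
  have hre := re_le_norm z
  exact mul_mem_slitPlane_of_re_pos (by simp; linarith) (by simp; linarith)

theorem cpow_one_div_two_mul_self (x : ℂ) : x ^ ((1 : ℂ) / 2) * x ^ ((1 : ℂ) / 2) = x := by
  rw [← sq, one_div]
  exact cpow_ofNat_inv_pow x 2

theorem HasDerivAt.cpow_const_of_eq_one {f : ℂ → ℂ} {f' x : ℂ} (c : ℂ) (hf : HasDerivAt f f' x)
    (hfx : f x = 1) : HasDerivAt (fun y => f y ^ c) (c * f') x := by
  simpa [hfx] using hf.cpow_const (c := c) (by simp [hfx])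

theorem sub_mul_sq_div_one_sub_eq_of_quadratic {α w z : ℂ} (hα : α ≠ 0)
    (hw : (1 + α) * (w * w) + -(1 + z) * w + z = 0) : w - α * w ^ 2 / (1 - w) = z := by
  have hw1 : 1 - w ≠ 0 := by
    intro h
    obtain rfl : w = 1 := (sub_eq_zero.1 h).symm
    exact hα (by linear_combination hw)
  field_simp
  linear_combination -hw

theorem sub_mul_sq_div_one_sub_eq_of_sq_eq {α z s : ℂ} (hα : α ≠ 0) (hα1 : 1 + α ≠ 0)
    (hs : s * s = 1 - 2 * (1 + 2 * α) * z + z ^ 2) :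
    (1 + z - s) / (2 * (1 + α)) -
      α * ((1 + z - s) / (2 * (1 + α))) ^ 2 / (1 - (1 + z - s) / (2 * (1 + α))) = z := by
  have hdiscrim : discrim (1 + α) (-(1 + z)) z = s * s := by
    rw [discrim, hs]
    ring
  refine sub_mul_sq_div_one_sub_eq_of_quadratic hα ?_
  exact (quadratic_eq_zero_iff hα1 hdiscrim _).2 (Or.inr (by rw [neg_neg]))

theorem sub_sqrt_mul_add_sqrt_eq_one {α : ℝ} (hα : 0 ≤ α) :
    (1 + 2 * α - 2 * √(α * (1 + α))) * (1 + 2 * α + 2 * √(α * (1 + α))) = 1 := by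
  have hsq := Real.sq_sqrt (by positivity : 0 ≤ α * (1 + α))
  linear_combination (-4) * hsq

theorem one_sub_two_mul_add_sq_eq_sub_mul_sub {c κ κs : ℂ} (hprod : κ * κs = 1)
    (hsum : κ + κs = 2 * c) (z : ℂ) : 1 - 2 * c * z + z ^ 2 = (κ - z) * (κs - z) := by
  linear_combination (-1 : ℂ) * hprod + z * hsum

/-- Inversion of `φ_α(w) = w - α w²/(1-w)`: the explicit function
`Ψ_α(z) = (1 + z - (1 - 2(1+2α)z + z²)^{1/2})/(2(1+α))` (principal branch of the square
root) is holomorphic on the disc of radius `κ_α = 1 + 2α - 2√(α(1+α))`, is tangent to the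
identity at `0`, and is a right composition inverse of `φ_α` there; moreover
`1 - 2(1+2α)z + z² = (κ_α - z)(κ_α* - z)` with `κ_α* = 1/κ_α = 1 + 2α + 2√(α(1+α))`. -/
theorem inverse_of_phi_alpha (α : ℝ) (hα : 0 < α)
    (κ : ℝ) (hκ : κ = 1 + 2 * α - 2 * Real.sqrt (α * (1 + α)))
    (κs : ℝ) (hκs : κs = 1 + 2 * α + 2 * Real.sqrt (α * (1 + α)))
    (Ψ : ℂ → ℂ)
    (hΨ : Ψ = fun z : ℂ =>
      (1 + z - (1 - 2 * (1 + 2 * (α : ℂ)) * z + z ^ 2) ^ ((1 : ℂ) / 2)) /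
        (2 * (1 + (α : ℂ))))
    (φ : ℂ → ℂ)
    (hφ : φ = fun w : ℂ => w - (α : ℂ) * w ^ 2 / (1 - w)) :
    DifferentiableOn ℂ Ψ (Metric.ball (0 : ℂ) κ) ∧
    Ψ 0 = 0 ∧ deriv Ψ 0 = 1 ∧
    (∀ z ∈ Metric.ball (0 : ℂ) κ, φ (Ψ z) = z) ∧
    κs = 1 / κ ∧
    (∀ z : ℂ, 1 - 2 * (1 + 2 * (α : ℂ)) * z + z ^ 2 = ((κ : ℂ) - z) * ((κs : ℂ) - z)) := by
  subst hΨ hφ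
  have hprod : κ * κs = 1 := hκ ▸ hκs ▸ sub_sqrt_mul_add_sqrt_eq_one hα.le
  have hsum : κ + κs = 2 * (1 + 2 * α) := by rw [hκ, hκs]; ring
  have hκ_le : κ ≤ κs := by rw [hκ, hκs]; linarith [Real.sqrt_nonneg (α * (1 + α))]
  have hfactor := one_sub_two_mul_add_sq_eq_sub_mul_sub (κ := κ) (κs := κs)
    (c := 1 + 2 * (α : ℂ)) (by exact_mod_cast hprod) (by exact_mod_cast hsum)
  have hslit (z : ℂ) (hz : z ∈ ball 0 κ) : 1 - 2 * (1 + 2 * (α : ℂ)) * z + z ^ 2 ∈ slitPlane :=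
    hfactor z ▸ sub_mul_sub_mem_slitPlane (mem_ball_zero_iff.1 hz) hκ_le
  have hα1 : (1 + α : ℂ) ≠ 0 := by exact_mod_cast (by linarith : 1 + α ≠ 0)
  have hquad (z : ℂ) : HasDerivAt (fun z : ℂ => 1 - 2 * (1 + 2 * (α : ℂ)) * z + z ^ 2)
      (-(2 * (1 + 2 * (α : ℂ))) + 2 * z) z := by
    simpa using (((hasDerivAt_id z).const_mul (2 * (1 + 2 * (α : ℂ)))).const_sub 1).fun_add
      (hasDerivAt_pow 2 z)
  have hderiv := (((hasDerivAt_id (0 : ℂ)).const_add 1).sub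
    ((hquad 0).cpow_const_of_eq_one ((1 : ℂ) / 2) (by simp))).div_const (2 * (1 + (α : ℂ)))
  refine ⟨fun z hz => ?_, by simp, hderiv.deriv.trans ?_, fun z _ => ?_,
    eq_one_div_of_mul_eq_one_right hprod, hfactor⟩
  · exact (((differentiableAt_const _).add differentiableAt_id).sub
      ((hquad z).differentiableAt.cpow_const (hslit z hz))).div_const _ |>.differentiableWithinAt
  · field_simp
    ring
  · exact sub_mul_sq_div_one_sub_eq_of_sq_eq (ofReal_ne_zero.2 hα.ne') hα1
      (cpow_one_div_two_mul_self _)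
end

section
/- Let ν ≥ 1 and α > 0. Define φ_{α,ν} : {z ∈ ℂ^ν : |z₁+⋯+z_ν| < 1} → ℂ^ν by φ_{α,ν,i}(z) = z_i − α·Z²/(1−Z) with Z = z₁+⋯+z_ν, for i = 1,…,ν. Let Ψ_{αν,1} be the one-dimensional inverse Ψ_{αν,1}(z) = (1 + z − (1 − 2(1+2αν)z + z²)^{1/2})/(2(1+αν)) (principal branch), and define Ψ_{α,ν} : 𝔻_{κ_{αν}/ν}^ν → ℂ^ν by Ψ_{α,ν,i}(z) = z_i + (1/ν)(Ψ_{αν,1}(Z) − Z) with Z = z₁+⋯+z_ν, where κ_β = 1 + 2β − 2√(β(1+β)). Then Ψ_{α,ν} is holomorphic on the polydisc 𝔻_{κ_{αν}/ν}^ν and satisfies Ψ_{α,ν}(φ_{α,ν}(z)) = z for all z in a neighborhood of 0 in ℂ^ν. -/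
/-!
Put `Z = ∑ z_j` and `β = αν`. Summing coordinates turns `φ_{α,ν}` into the one-variable map
`φ₁(Z) = Z - βZ²/(1-Z)`, and then `Ψ_{α,ν,i}(φ(z)) = z_i - αZ²/(1-Z) + (Z - φ₁(Z))/ν = z_i` as soon
as `Ψ_{β,1}(φ₁(Z)) = Z`. For that, `A = 1 + φ₁(Z) - 2(1+β)Z` satisfies
`A² = 1 - 2(1+2β)φ₁(Z) + φ₁(Z)²` and `A → 1` as `Z → 0`, so near `0` the principal square root of
the radicand is `A` itself.

Holomorphy: the radicand `1 - 2(1+2β)w + w²` equals `(w - κ_β)(w - 1/κ_β)`. For real `w` with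
`|w| < κ_β ≤ 1` both factors are negative, and off the real axis its imaginary part
`2 Im w (Re w - 1 - 2β)` does not vanish, so it stays in the slit plane on the disc `|w| < κ_β`,
which the sum maps the polydisc of radius `κ_β/ν` into.
-/

open Complex Metric Filter Topology

noncomputable section

def kappa (β : ℝ) : ℝ := 1 + 2 * β - 2 * √(β * (1 + β))

def phiOne (β Z : ℂ) : ℂ := Z - β * Z ^ 2 / (1 - Z)

def psiOne (β w : ℂ) : ℂ :=
  (1 + w - (1 - 2 * (1 + 2 * β) * w + w ^ 2) ^ ((1 : ℂ) / 2)) / (2 * (1 + β))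

theorem kappa_le_one {β : ℝ} (hβ : 0 ≤ β) : kappa β ≤ 1 := by
  have : β ≤ √(β * (1 + β)) := Real.le_sqrt_of_sq_le (by nlinarith)
  unfold kappa; linarith

theorem radicand_mem_slitPlane {β : ℝ} (hβ : 0 ≤ β) {w : ℂ} (hw : ‖w‖ < kappa β) :
    1 - 2 * (1 + 2 * (β : ℂ)) * w + w ^ 2 ∈ slitPlane := by
  have hκ := kappa_le_one hβ
  have hre : |w.re| < kappa β := (abs_re_le_norm w).trans_lt hw
  rw [mem_slitPlane_iff]
  rcases eq_or_ne w.im 0 with him | him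
  · left
    have hs : √(β * (1 + β)) ^ 2 = β * (1 + β) := Real.sq_sqrt (by positivity)
    have hs0 := Real.sqrt_nonneg (β * (1 + β))
    unfold kappa at hre hκ
    have := abs_lt.1 hre
    simp only [sq, add_re, sub_re, one_re, mul_re, re_ofNat, ofReal_re, im_ofNat, ofReal_im,
      mul_zero, sub_zero, add_im, one_im, mul_im, zero_mul, add_zero, him, gt_iff_lt]
    nlinarith
  · right
    have : w.re < 1 + 2 * β := by linarith [le_abs_self w.re]
    have hfac : -(2 * (1 + 2 * β) * w.im) + (w.re * w.im + w.im * w.re)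
        = 2 * w.im * (w.re - (1 + 2 * β)) := by ring
    simpa [sq, hfac, him] using sub_ne_zero.2 this.ne

theorem differentiableOn_psiOne {β : ℝ} (hβ : 0 ≤ β) :
    DifferentiableOn ℂ (psiOne β) (ball 0 (kappa β)) := by
  intro w hw
  have := radicand_mem_slitPlane hβ (mem_ball_zero_iff.1 hw)
  unfold psiOne
  fun_prop (disch := assumption)

theorem sq_one_add_phiOne {β Z : ℂ} (hZ : 1 - Z ≠ 0) :
    (1 + phiOne β Z - 2 * (1 + β) * Z) ^ 2 =
      1 - 2 * (1 + 2 * β) * phiOne β Z + phiOne β Z ^ 2 := by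
  unfold phiOne; field_simp; ring

theorem eventually_psiOne_phiOne {β : ℂ} (hβ : 1 + β ≠ 0) :
    ∀ᶠ Z in 𝓝 0, psiOne β (phiOne β Z) = Z := by
  have hcont : ContinuousAt (fun Z => 1 + phiOne β Z - 2 * (1 + β) * Z) 0 := by
    unfold phiOne; fun_prop (disch := norm_num)
  have hne : ∀ᶠ Z in 𝓝 (0 : ℂ), 1 - Z ≠ 0 :=
    (continuousAt_const.sub continuousAt_id).eventually_ne (by norm_num)
  have hre : ∀ᶠ Z in 𝓝 (0 : ℂ), 0 < (1 + phiOne β Z - 2 * (1 + β) * Z).re :=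
    continuousAt_const.eventually_lt (continuous_re.continuousAt.comp hcont) (by simp [phiOne])
  filter_upwards [hne, hre] with Z hZ hZre
  rw [psiOne, ← sq_one_add_phiOne hZ, one_div, sq_cpow_two_inv hZre]
  field_simp
  ring

theorem mapsTo_sum_ball {ν : ℕ} (hν : 0 < ν) (r : ℝ) :
    Set.MapsTo (fun z : Fin ν → ℂ => ∑ j, z j) (ball 0 (r / ν)) (ball 0 r) := fun z hz => by
  have hνR : (0 : ℝ) < ν := by exact_mod_cast hν
  rw [mem_ball_zero_iff] at hz ⊢
  have hsum : ‖∑ j, z j‖ ≤ ν * ‖z‖ := by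
    simpa using (norm_sum_le _ _).trans (Pi.sum_norm_apply_le_norm z)
  calc ‖∑ j, z j‖ ≤ ν * ‖z‖ := hsum
    _ < ν * (r / ν) := by gcongr
    _ = r := by field_simp

section Multi

variable (ν : ℕ)

def phiMulti (α : ℂ) (z : Fin ν → ℂ) : Fin ν → ℂ :=
  fun i => z i - α * (∑ j, z j) ^ 2 / (1 - ∑ j, z j)

def psiMulti (α : ℂ) (z : Fin ν → ℂ) : Fin ν → ℂ :=
  fun i => z i + (1 / (ν : ℂ)) * (psiOne (α * ν) (∑ j, z j) - ∑ j, z j)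

variable {ν}

theorem sum_phiMulti (α : ℂ) (z : Fin ν → ℂ) :
    ∑ j, phiMulti ν α z j = phiOne (α * ν) (∑ j, z j) := by
  simp only [phiMulti, phiOne, Finset.sum_sub_distrib, Finset.sum_const, Finset.card_univ,
    Fintype.card_fin, nsmul_eq_mul]
  ring

theorem differentiableOn_psiMulti (hν : 0 < ν) {α : ℝ} (hα : 0 ≤ α) :
    DifferentiableOn ℂ (psiMulti ν α) (ball 0 (kappa (α * ν) / ν)) := by
  have hψ := differentiableOn_psiOne (mul_nonneg hα (Nat.cast_nonneg ν))
  push_cast at hψ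
  rw [differentiableOn_pi]
  intro i
  exact (differentiable_apply i).differentiableOn.add
    (((hψ.comp (by fun_prop) (mapsTo_sum_ball hν _)).sub (by fun_prop)).const_mul _)

theorem eventually_psiMulti_phiMulti (hν : (ν : ℂ) ≠ 0) {α : ℂ} (hα : 1 + α * ν ≠ 0) :
    ∀ᶠ z in 𝓝 0, psiMulti ν α (phiMulti ν α z) = z := by
  have hsum : Tendsto (fun z : Fin ν → ℂ => ∑ j, z j) (𝓝 0) (𝓝 0) := by
    simpa using ((continuous_finsetSum Finset.univ fun j _ => continuous_apply j).tendsto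
      (0 : Fin ν → ℂ))
  filter_upwards [hsum.eventually (eventually_psiOne_phiOne hα)] with z hz
  funext i
  simp only [psiMulti, sum_phiMulti, hz]
  simp only [phiMulti, phiOne]
  field_simp
  ring

end Multi

/-- The ν-dimensional inverse `Ψ_{α,ν}`, built from the one-dimensional inverse
`Ψ_{αν,1}(z) = (1 + z - (1 - 2(1+2αν)z + z²)^{1/2})/(2(1+αν))` by
`Ψ_{α,ν,i}(z) = z_i + (1/ν)(Ψ_{αν,1}(Z) - Z)` with `Z = z₁+⋯+z_ν`, is holomorphic on the
polydisc of radius `κ_{αν}/ν` (where `κ_β = 1 + 2β - 2√(β(1+β))`) and it is a left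
composition inverse near `0` of `φ_{α,ν}` defined by `φ_{α,ν,i}(z) = z_i - α Z²/(1-Z)`. -/
theorem inverse_of_phi_alpha_nu (ν : ℕ) (hν : 1 ≤ ν) (α : ℝ) (hα : 0 < α)
    (κ : ℝ) (hκ : κ = 1 + 2 * (α * ν) - 2 * Real.sqrt ((α * ν) * (1 + α * ν)))
    (Ψ₁ : ℂ → ℂ)
    (hΨ₁ : Ψ₁ = fun w : ℂ =>
      (1 + w - (1 - 2 * (1 + 2 * ((α : ℂ) * (ν : ℂ))) * w + w ^ 2) ^ ((1 : ℂ) / 2)) /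
        (2 * (1 + (α : ℂ) * (ν : ℂ))))
    (φ : (Fin ν → ℂ) → (Fin ν → ℂ))
    (hφ : φ = fun z i => z i - (α : ℂ) * (∑ j, z j) ^ 2 / (1 - ∑ j, z j))
    (Ψ : (Fin ν → ℂ) → (Fin ν → ℂ))
    (hΨ : Ψ = fun z i => z i + (1 / (ν : ℂ)) * (Ψ₁ (∑ j, z j) - ∑ j, z j)) :
    DifferentiableOn ℂ Ψ (Metric.ball (0 : Fin ν → ℂ) (κ / ν)) ∧
    ∃ ε > 0, ∀ z ∈ Metric.ball (0 : Fin ν → ℂ) ε, Ψ (φ z) = z := by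
  obtain rfl : κ = kappa (α * ν) := hκ
  obtain rfl : Ψ = psiMulti ν α := by subst hΨ hΨ₁; rfl
  obtain rfl : φ = phiMulti ν α := hφ
  have hνC : (ν : ℂ) ≠ 0 := by exact_mod_cast (by omega : ν ≠ 0)
  have h1 : (1 : ℂ) + α * ν ≠ 0 := by exact_mod_cast (by positivity : (0 : ℝ) < 1 + α * ν).ne'
  obtain ⟨ε, hε, hinv⟩ :=
    Metric.eventually_nhds_iff_ball.1 (eventually_psiMulti_phiMulti hνC h1)
  exact ⟨differentiableOn_psiMulti hν hα.le, ε, hε, hinv⟩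
end
end

section
/- Let z ∈ ℂ. If |Im z| > 1/2, then |e^{2πiz} − 1| > 1/3. If |Im z| ≤ 1/2, then |e^{2πiz} − 1| ≥ d(z, ℤ), where d(z, ℤ) = inf{|z − n| : n ∈ ℤ} is the distance from z to ℤ in ℂ. -/
/-!
Put `t = -2π Im z` and `x = Re z`, so that `|e^{2πiz}| = e^t` and
`|e^{2πiz} - 1|² = (e^t - 1)² + 4 e^t sin²(πx)`.
If `|Im z| > 1/2` then `|t| > π`, so `e^t < 1/4` or `e^t > 4`.
Otherwise, after subtracting the nearest integer we may assume `|x| ≤ 1/2`. Then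
`|t| ≤ 2π |e^t - 1|` bounds `(Im z)²` by the first term and Jordan's inequality
`|sin πx| ≥ 2|x|` bounds `x²` by the second as long as `e^t ≥ 1/16`; when `e^t < 1/16` the
first term alone exceeds `1/2 ≥ |z|²`.
-/

open Complex Metric

noncomputable section

/-- The set of integers inside ℂ. -/
def intsC : Set ℂ := Set.range ((↑·) : ℤ → ℂ)

open scoped Real

lemma one_third_lt_abs_exp_sub_one {s : ℝ} (hs : π < |s|) : 1 / 3 < |Real.exp s - 1| := by
  have hπ : 4 < Real.exp π := by
    linarith [Real.add_one_lt_exp Real.pi_pos.ne', Real.pi_gt_three]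
  rcases lt_abs.mp hs with hs | hs
  · have : Real.exp π < Real.exp s := Real.exp_lt_exp.mpr hs
    rw [abs_of_pos (by linarith)]
    linarith
  · have : Real.exp s * Real.exp π < 1 := by
      rw [← Real.exp_add, Real.exp_lt_one_iff]
      linarith
    rw [abs_of_neg (by nlinarith [Real.exp_pos s])]
    nlinarith [Real.exp_pos s]

lemma abs_le_two_pi_mul_abs_exp_sub_one {t : ℝ} (ht : -π ≤ t) :
    |t| ≤ 2 * π * |Real.exp t - 1| := by
  rcases le_or_gt 0 t with ht₀ | ht₀
  · have := Real.add_one_le_exp t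
    rw [abs_of_nonneg ht₀, abs_of_nonneg (by linarith)]
    nlinarith [Real.pi_gt_three]
  · -- `exp (-t) ≥ 1 - t` gives `1 - exp t ≥ -t / (1 - t)`, and `1 - t ≤ 1 + π ≤ 2π`
    have h : Real.exp t * (1 - t) ≤ 1 := by
      calc Real.exp t * (1 - t) ≤ Real.exp t * Real.exp (-t) := by
            gcongr; linarith [Real.add_one_le_exp (-t)]
        _ = 1 := by rw [← Real.exp_add, add_neg_cancel, Real.exp_zero]
    rw [abs_of_neg ht₀, abs_of_neg (by rwa [sub_neg, Real.exp_lt_one_iff])]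
    nlinarith [Real.exp_pos t, Real.pi_gt_three]

lemma norm_exp_sub_one_sq (a : ℂ) :
    ‖exp a - 1‖ ^ 2 =
      (Real.exp a.re - 1) ^ 2 + 4 * Real.exp a.re * Real.sin (a.im / 2) ^ 2 := by
  have hcos : Real.cos a.im = 1 - 2 * Real.sin (a.im / 2) ^ 2 := by
    have h := Real.cos_two_mul' (a.im / 2)
    rw [mul_div_cancel₀ _ two_ne_zero] at h
    linear_combination h + Real.sin_sq_add_cos_sq (a.im / 2)
  rw [Complex.sq_norm, Complex.normSq_apply]
  simp only [sub_re, sub_im, exp_re, exp_im, one_re, one_im]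
  linear_combination (Real.exp a.re) ^ 2 * Real.sin_sq_add_cos_sq a.im - 2 * Real.exp a.re * hcos

lemma four_mul_sq_le_sin_pi_mul_sq {x : ℝ} (hx : |x| ≤ 1 / 2) :
    4 * x ^ 2 ≤ Real.sin (π * x) ^ 2 := by
  have h := Real.mul_abs_le_abs_sin (x := π * x) <| by
    rw [abs_mul, abs_of_pos Real.pi_pos]
    nlinarith [Real.pi_pos]
  rw [abs_mul, abs_of_pos Real.pi_pos, ← mul_assoc, div_mul_cancel₀ _ Real.pi_ne_zero] at h
  nlinarith [sq_abs x, sq_abs (Real.sin (π * x)), abs_nonneg x]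

lemma sq_add_sq_le_exp_sub_one_sq_add {x t : ℝ} (hx : |x| ≤ 1 / 2) (ht : |t| ≤ π) :
    x ^ 2 + (t / (2 * π)) ^ 2 ≤
      (Real.exp t - 1) ^ 2 + 4 * Real.exp t * Real.sin (π * x) ^ 2 := by
  have hx2 : x ^ 2 ≤ 1 / 4 := by nlinarith [sq_abs x, abs_nonneg x]
  have habs_t : |t / (2 * π)| = |t| / (2 * π) := by
    rw [abs_div, abs_of_pos (by positivity : (0 : ℝ) < 2 * π)]
  have ht2 : (t / (2 * π)) ^ 2 ≤ 1 / 4 := by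
    have : |t / (2 * π)| ≤ 1 / 2 := by
      rw [habs_t, div_le_iff₀ (by positivity)]
      linarith
    nlinarith [sq_abs (t / (2 * π)), abs_nonneg (t / (2 * π))]
  rcases le_or_gt (1 / 16) (Real.exp t) with hexp | hexp
  · have hy : (t / (2 * π)) ^ 2 ≤ (Real.exp t - 1) ^ 2 := by
      refine sq_le_sq.mpr ?_
      rw [habs_t, div_le_iff₀ (by positivity), mul_comm]
      exact abs_le_two_pi_mul_abs_exp_sub_one (neg_le_of_abs_le ht)
    nlinarith [four_mul_sq_le_sin_pi_mul_sq hx, sq_nonneg x]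
  · nlinarith [sq_nonneg (Real.sin (π * x)), Real.exp_pos t]

lemma norm_le_norm_exp_two_pi_I_mul_sub_one {w : ℂ} (hre : |w.re| ≤ 1 / 2)
    (him : |w.im| ≤ 1 / 2) : ‖w‖ ≤ ‖exp (2 * π * I * w) - 1‖ := by
  have ht : |-(2 * π * w.im)| ≤ π := by
    rw [abs_neg, abs_mul, abs_of_pos (by positivity)]
    nlinarith [Real.pi_pos]
  have key := sq_add_sq_le_exp_sub_one_sq_add hre ht
  rw [neg_div, mul_div_cancel_left₀ _ (by positivity), neg_sq] at key
  have hre' : (2 * π * I * w).re = -(2 * π * w.im) := by simp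
  have him' : (2 * π * I * w).im / 2 = π * w.re := by simp [mul_div_right_comm]
  refine (sq_le_sq₀ (norm_nonneg _) (norm_nonneg _)).mp ?_
  rwa [norm_exp_sub_one_sq, hre', him', Complex.sq_norm, normSq_apply, ← sq, ← sq]

/-- For `z ∈ ℂ`: if `|Im z| > 1/2` then `|e^{2πiz} - 1| > 1/3`; if `|Im z| ≤ 1/2` then
`|e^{2πiz} - 1| ≥ d(z, ℤ)`, the distance from `z` to the integers. -/
theorem exp_two_pi_I_sub_one_lower_bound (z : ℂ) :
    (1 / 2 < |z.im| →
      1 / 3 < ‖Complex.exp (2 * Real.pi * Complex.I * z) - 1‖) ∧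
    (|z.im| ≤ 1 / 2 →
      Metric.infDist z intsC ≤
        ‖Complex.exp (2 * Real.pi * Complex.I * z) - 1‖) := by
  constructor
  · intro him
    have hs : π < |-(2 * π * z.im)| := by
      rw [abs_neg, abs_mul, abs_of_pos (by positivity)]
      nlinarith [Real.pi_pos]
    calc 1 / 3 < |Real.exp (-(2 * π * z.im)) - 1| := one_third_lt_abs_exp_sub_one hs
      _ = |‖exp (2 * π * I * z)‖ - ‖(1 : ℂ)‖| := by simp [norm_exp]
      _ ≤ _ := abs_norm_sub_norm_le _ _
  · intro him
    set n := round z.re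
    have hperiod : exp (2 * π * I * (z - n)) = exp (2 * π * I * z) := by
      rw [mul_sub, mul_comm (2 * π * I) (n : ℂ)]
      exact exp_periodic.sub_int_mul_eq n
    calc infDist z intsC ≤ dist z n := infDist_le_dist_of_mem ⟨n, rfl⟩
      _ = ‖z - n‖ := dist_eq z n
      _ ≤ ‖exp (2 * π * I * (z - n)) - 1‖ :=
        norm_le_norm_exp_two_pi_I_mul_sub_one (by simpa using abs_sub_round z.re)
          (by simpa using him)
      _ = _ := by rw [hperiod]
end
end
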